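/- For every n ≥ 0, the cube hypergraph ℂₙ = {{1},{2},…,{n+1}} ∪ {{1,…,i} : 1 ≤ i ≤ n+1} on H = {1,…,n+1} is a connected contextual hypergraph. Moreover, for any p and any distinct i, j, x ∈ {1,…,p+1}, i and j lie in the same connected component of ℂ_p restricted to the complement of {x} if and only if i < x and j < x. -/

import Mathlib

open scoped Classical

noncomputable section

/-! ## Hypergraphs (nestohedra combinatorics), after Curien–Laplante-Anfossi:
hypergraphs, restrictions, connectivity, saturation, reconnected restriction,
constructs/constructions, the face order, the flip rewriting, and terms over the
associated signatures. -/

/-- A hypergraph on a finite vertex set: a finite set of nonempty hyperedges whose union is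
the vertex set, assumed atomic (every singleton is a hyperedge). -/
structure FHypergraph (α : Type*) [DecidableEq α] where
  verts : Finset α
  edges : Finset (Finset α)
  edges_nonempty : ∀ e ∈ edges, e.Nonempty
  edges_subset : ∀ e ∈ edges, e ⊆ verts
  atomic : ∀ v ∈ verts, {v} ∈ edges

namespace FHypergraph

variable {α : Type*} [DecidableEq α]

/-- The plain restriction `𝓗_X` of a hypergraph to a subset `X` of its vertices. -/
def restrict (H : FHypergraph α) (X : Finset α) : FHypergraph α where
  verts := X ∩ H.verts
  edges := H.edges.filter (· ⊆ X)
  edges_nonempty e he := H.edges_nonempty e (Finset.mem_filter.mp he).1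
  edges_subset e he :=
    Finset.subset_inter (Finset.mem_filter.mp he).2 (H.edges_subset e (Finset.mem_filter.mp he).1)
  atomic v hv := by
    rcases Finset.mem_inter.mp hv with ⟨h1, h2⟩
    exact Finset.mem_filter.mpr ⟨H.atomic v h2, Finset.singleton_subset_iff.mpr h1⟩

/-- A hypergraph is connected if its vertex set is nonempty and admits no nontrivial
partition `X₁ ∪ X₂` such that every edge lies in `X₁` or in `X₂`. -/
def Connected (H : FHypergraph α) : Prop :=
  H.verts.Nonempty ∧ ∀ X₁ X₂ : Finset α, X₁.Nonempty → X₂.Nonempty →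
    Disjoint X₁ X₂ → X₁ ∪ X₂ = H.verts → ∃ e ∈ H.edges, ¬e ⊆ X₁ ∧ ¬e ⊆ X₂

/-- `C` is (the vertex set of) a connected component of `H`: a maximal connected subset. -/
def IsComponent (H : FHypergraph α) (C : Finset α) : Prop :=
  C ⊆ H.verts ∧ (H.restrict C).Connected ∧
    ∀ D : Finset α, C ⊆ D → D ⊆ H.verts → (H.restrict D).Connected → D = C

/-- `y` and `z` lie in the same connected component of `H`. -/
def SameComponent (H : FHypergraph α) (y z : α) : Prop :=
  ∃ C : Finset α, H.IsComponent C ∧ y ∈ C ∧ z ∈ C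

/-- The saturation `Sat(𝓗)`: the set of (nonempty) connected subsets of vertices. -/
def sat (H : FHypergraph α) : Finset (Finset α) :=
  H.verts.powerset.filter fun X => (H.restrict X).Connected

theorem singleton_connected (H : FHypergraph α) {v : α} (hv : v ∈ H.verts) :
    (H.restrict {v}).Connected := by
  constructor
  · exact ⟨v, Finset.mem_inter.mpr ⟨Finset.mem_singleton_self v, hv⟩⟩
  · intro X₁ X₂ h₁ h₂ hd hu
    exfalso
    have hv' : ({v} : Finset α) ∩ H.verts = {v} :=
      Finset.inter_eq_left.mpr (Finset.singleton_subset_iff.mpr hv)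
    have hu' : X₁ ∪ X₂ = ({v} : Finset α) := hu.trans hv'
    have hX₁ : X₁ ⊆ {v} := hu' ▸ Finset.subset_union_left
    have hX₂ : X₂ ⊆ {v} := hu' ▸ Finset.subset_union_right
    obtain ⟨a, ha⟩ := h₁
    obtain ⟨b, hb⟩ := h₂
    have ha' := Finset.mem_singleton.mp (hX₁ ha)
    have hb' := Finset.mem_singleton.mp (hX₂ hb)
    subst ha'; exact Finset.disjoint_left.mp hd ha (hb' ▸ hb)

/-- The reconnected restriction `𝓗 ↾ X` of `𝓗` to `X`. -/
def reconRestrict (H : FHypergraph α) (X : Finset α) : FHypergraph α where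
  verts := X ∩ H.verts
  edges := (H.sat.image (· ∩ X)).filter (·.Nonempty)
  edges_nonempty e he := (Finset.mem_filter.mp he).2
  edges_subset := by
    intro e he
    rcases Finset.mem_image.mp (Finset.mem_filter.mp he).1 with ⟨Z, hZ, rfl⟩
    have hZv : Z ⊆ H.verts := Finset.mem_powerset.mp (Finset.mem_filter.mp hZ).1
    exact fun a ha => Finset.mem_inter.mpr
      ⟨(Finset.mem_inter.mp ha).2, hZv (Finset.mem_inter.mp ha).1⟩
  atomic := by
    intro v hv
    rcases Finset.mem_inter.mp hv with ⟨h1, h2⟩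
    refine Finset.mem_filter.mpr ⟨Finset.mem_image.mpr ⟨{v}, ?_, ?_⟩, ?_⟩
    · exact Finset.mem_filter.mpr
        ⟨Finset.mem_powerset.mpr (Finset.singleton_subset_iff.mpr h2),
         H.singleton_connected h2⟩
    · exact Finset.inter_eq_left.mpr (Finset.singleton_subset_iff.mpr h1)
    · exact ⟨v, by simp [Finset.inter_eq_left.mpr (Finset.singleton_subset_iff.mpr h1)]⟩

/-- `x ⇝ {y,z}` in `𝓗`: after removing `x`, the vertices `y` and `z` lie in the same
connected component.  Its negation is "`x` disconnects `y` and `z` in `𝓗`". -/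
def Links (H : FHypergraph α) (x y z : α) : Prop :=
  (H.restrict (H.verts \ {x})).SameComponent y z

/-- A hypergraph is contextual if for every connected subset `Y` of cardinality at least 3
and all distinct `x, y, z ∈ Y`, `x` disconnects `y` and `z` in `𝓗_Y` iff it does in `𝓗`. -/
def Contextual (H : FHypergraph α) : Prop :=
  ∀ Y : Finset α, Y ⊆ H.verts → (H.restrict Y).Connected → 3 ≤ Y.card →
    ∀ x y z : α, x ∈ Y → y ∈ Y → z ∈ Y → x ≠ y → y ≠ z → x ≠ z →
      ((H.restrict Y).Links x y z ↔ H.Links x y z)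

end FHypergraph

/-- Finite rooted trees with nodes decorated by finite sets (potential constructs). -/
inductive FTree (α : Type*) : Type _ where
  | node : Finset α → List (FTree α) → FTree α

namespace FTree

variable {α : Type*} [DecidableEq α]

/-- The decoration of the root node. -/
def label : FTree α → Finset α
  | node Y _ => Y

/-- The list of children of the root node. -/
def children : FTree α → List (FTree α)
  | node _ ts => ts

/-- The support of a tree: the union of the decorations of its nodes. -/
def support : FTree α → Finset α
  | node Y [] => Y
  | node Y (t :: ts) => support t ∪ support (node Y ts)

/-- The list of decorations of the nodes of a tree. -/
def labels : FTree α → List (Finset α)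
  | node Y [] => [Y]
  | node Y (t :: ts) => labels t ++ labels (node Y ts)

/-- The dimension of a construct: the sum over its nodes `X` of `|X| - 1`. -/
def dim (T : FTree α) : ℕ := (T.labels.map fun X => X.card - 1).sum

mutual
  /-- The (full) subtree rooted at the node decorated by `X`, if any. -/
  def subtreeAt : FTree α → Finset α → Option (FTree α)
    | node Y ts, X => if Y = X then some (node Y ts) else subtreeAtList ts X
  def subtreeAtList : List (FTree α) → Finset α → Option (FTree α)
    | [], _ => none
    | t :: ts, X => (subtreeAt t X).elim (subtreeAtList ts X) some
end

/-- The support `supp (T ↾ X)` of the subtree rooted at the node decorated by `X`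
(or `∅` if there is no such node). -/
def suppAt (T : FTree α) (X : Finset α) : Finset α :=
  ((T.subtreeAt X).map support).getD ∅

mutual
  /-- The list of supports of the subtrees rooted at the nodes of `T` (its nested set). -/
  def nests : FTree α → List (Finset α)
    | node Y ts => support (node Y ts) :: nestsList ts
  def nestsList : List (FTree α) → List (Finset α)
    | [] => []
    | t :: ts => nests t ++ nestsList ts
end

/-- The nested set of a tree, as a finite set. -/
def nestSet (T : FTree α) : Finset (Finset α) := T.nests.toFinset

/-- `S ≺ T` (`S` is covered by `T`) in the face order: `T` is obtained from `S` by
contracting one edge between a node and its father (equivalently, the nested set of `T`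
is obtained from that of `S` by removing one non-root element). -/
def CoveredBy (S T : FTree α) : Prop :=
  ∃ N ∈ S.nests, N ≠ S.support ∧ T.nestSet = S.nestSet.erase N

/-- The face (subface) order `S ≼ T` on constructs: the reflexive–transitive closure of
the covering relation `≺`. -/
def FaceLe (S T : FTree α) : Prop := Relation.ReflTransGen CoveredBy S T

/-- `IsSubtree S T`: `S` is a (full) subtree of `T`. -/
inductive IsSubtree : FTree α → FTree α → Prop
  | refl (t : FTree α) : IsSubtree t t
  | child {s t u : FTree α} : IsSubtree s t → t ∈ u.children → IsSubtree s u

/-- In `T`, the node decorated by `X` has a child decorated by `Y`. -/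
def ParentChild (X Y : Finset α) (T : FTree α) : Prop :=
  ∃ R : FTree α, IsSubtree R T ∧ R.label = X ∧ ∃ t ∈ R.children, t.label = Y

mutual
  /-- Pruning: remove all (subtrees rooted at) nodes whose decoration is not a subset
  of `X`, keeping the root. -/
  def prune (X : Finset α) : FTree α → FTree α
    | node Y ts => node Y (pruneList X ts)
  def pruneList (X : Finset α) : List (FTree α) → List (FTree α)
    | [] => []
    | t :: ts => if t.label ⊆ X then prune X t :: pruneList X ts else pruneList X ts
end

end FTree

/-- `IsConstruct H T`: the tree `T` is a construct of the hypergraph `H`: its root `Y` is a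
nonempty subset of the vertices, its children are constructs of the connected components of
`𝓗 ∖ Y` (one for each component, listed by increasing maximal vertex). -/
inductive IsConstruct {α : Type*} [LinearOrder α] : FHypergraph α → FTree α → Prop
  | node {H : FHypergraph α} (Y : Finset α) (ts : List (FTree α))
      (hY : Y.Nonempty) (hYsub : Y ⊆ H.verts)
      (hmem : ∀ t ∈ ts, (H.restrict (H.verts \ Y)).IsComponent t.support)
      (hcover : ∀ C : Finset α, (H.restrict (H.verts \ Y)).IsComponent C →
        ∃ t ∈ ts, t.support = C)
      (hsorted : ts.Pairwise fun a b => a.support.max < b.support.max)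
      (hchild : ∀ t ∈ ts, IsConstruct (H.restrict t.support) t) :
      IsConstruct H (FTree.node Y ts)

section ConstructionOrder

variable {α : Type*} [LinearOrder α]

/-- A construction: a construct all of whose nodes are singletons (a vertex of the
nestohedron). -/
def IsConstruction (H : FHypergraph α) (T : FTree α) : Prop :=
  IsConstruct H T ∧ ∀ X ∈ T.labels, X.card = 1

/-- An `X`-face: a 2-dimensional construct whose unique non-singleton node is decorated
by `X`, of cardinality 3. -/
def IsXFace (H : FHypergraph α) (X : Finset α) (T : FTree α) : Prop :=
  IsConstruct H T ∧ X.card = 3 ∧ X ∈ T.labels ∧ ∀ Y ∈ T.labels, Y ≠ X → Y.card = 1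

/-- Two distinct constructions are joined by an edge of the nestohedron: both are covered
by a common 1-dimensional construct. -/
def EdgeJoined (H : FHypergraph α) (S T : FTree α) : Prop :=
  IsConstruction H S ∧ IsConstruction H T ∧ S ≠ T ∧
  ∃ V : FTree α, IsConstruct H V ∧ V.dim = 1 ∧ FTree.CoveredBy S V ∧ FTree.CoveredBy T V

/-- The flip rewriting relation `S → T` on constructions of an ordered hypergraph:
`S` and `T` are the two endpoints of an edge whose 1-dimensional face has unique
non-singleton node `{x, y}` with `x < y`, and in `S` the node `{x}` is the parent of the
node `{y}`. -/
def Flip (H : FHypergraph α) (S T : FTree α) : Prop :=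
  IsConstruction H S ∧ IsConstruction H T ∧ S ≠ T ∧
  ∃ (V : FTree α) (x y : α), IsConstruct H V ∧ V.dim = 1 ∧ x ≠ y ∧
    ({x, y} : Finset α) ∈ V.labels ∧ FTree.CoveredBy S V ∧ FTree.CoveredBy T V ∧
    FTree.ParentChild ({x} : Finset α) ({y} : Finset α) S ∧ x < y

/-- The coordinate vector of a construction `S` of `H`:
`v^S_x = |{e ∈ Sat(𝓗) : x ∈ e ⊆ supp (S ↾ x)}|`. -/
def coordVec (H : FHypergraph α) (S : FTree α) (x : α) : ℕ :=
  (H.sat.filter fun e => x ∈ e ∧ e ⊆ S.suppAt {x}).card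

end ConstructionOrder

/-- Raw terms over the signature `Σ_𝓗` (and `Σ^c_𝓗`): variables are (connected) subsets,
function symbols are pairs `(X, Y)` of subsets, applied to a list of arguments. -/
inductive HTerm (α : Type*) : Type _ where
  | var : Finset α → HTerm α
  | app : Finset α → Finset α → List (HTerm α) → HTerm α

namespace HTerm

variable {α : Type*} [DecidableEq α]

/-- The (output) sort of a term. -/
def sortOf : HTerm α → Finset α
  | var A => A
  | app _ Y _ => Y

/-- The list of variables occurring in a term. -/
def varsList : HTerm α → List (Finset α)
  | var A => [A]
  | app _ _ [] => []
  | app X Y (t :: ts) => varsList t ++ varsList (app X Y ts)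

/-- The list of first components of the function symbols occurring in a term. -/
def appFirsts : HTerm α → List (Finset α)
  | var _ => []
  | app X _ [] => [X]
  | app X Y (t :: ts) => appFirsts t ++ appFirsts (app X Y ts)

/-- A term is closed if it contains no variables. -/
def Closed (t : HTerm α) : Prop := t.varsList = []

/-- The union `⋃ var(t)` of the variables of a term. -/
def varsUnion (t : HTerm α) : Finset α := t.varsList.foldr (· ∪ ·) ∅

mutual
  /-- Projection of a term to a decorated tree: every function symbol `(X, Y)` is sent to
  its first component `X`, and all variables are pruned. -/
  def toTree : HTerm α → FTree α
    | .var A => .node A []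
    | .app X _ ts => .node X (toTreeList ts)
  def toTreeList : List (HTerm α) → List (FTree α)
    | [] => []
    | .var _ :: ts => toTreeList ts
    | t :: ts => toTree t :: toTreeList ts
end

end HTerm

/-- Well-formed terms over the signature `Σ_𝓗` associated with the hypergraph `H`:
a variable is a connected subset (its own sort); a function symbol `(X, Y)` (with
`∅ ≠ X ⊆ Y ⊆ H` and `Y` connected) is applied to arguments whose sorts are exactly the
connected components of `𝓗_Y ∖ X`, listed by increasing maximal vertex. -/
inductive IsTerm {α : Type*} [LinearOrder α] (H : FHypergraph α) : HTerm α → Prop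
  | var (A : Finset α) : A ⊆ H.verts → (H.restrict A).Connected → IsTerm H (.var A)
  | app (X Y : Finset α) (ts : List (HTerm α)) :
      X.Nonempty → X ⊆ Y → Y ⊆ H.verts → (H.restrict Y).Connected →
      (∀ t ∈ ts, (H.restrict (Y \ X)).IsComponent t.sortOf) →
      (∀ C : Finset α, (H.restrict (Y \ X)).IsComponent C → ∃ t ∈ ts, t.sortOf = C) →
      ts.Pairwise (fun a b => a.sortOf.max < b.sortOf.max) →
      (∀ t ∈ ts, IsTerm H t) →
      IsTerm H (.app X Y ts)


/-- The cube hypergraph `ℂₙ` on `{1, …, n+1}`: all singletons together with the initial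
intervals `{1, …, i}` for `1 ≤ i ≤ n+1`. -/
def cubeH (n : ℕ) : FHypergraph ℕ where
  verts := Finset.Icc 1 (n + 1)
  edges := (Finset.Icc 1 (n + 1)).image (fun i => {i}) ∪
    (Finset.Icc 1 (n + 1)).image (fun i => Finset.Icc 1 i)
  edges_nonempty := by
    intro e he
    rcases Finset.mem_union.mp he with h | h
    · rcases Finset.mem_image.mp h with ⟨i, _, rfl⟩
      exact ⟨i, Finset.mem_singleton_self i⟩
    · rcases Finset.mem_image.mp h with ⟨i, hi, rfl⟩
      rw [Finset.mem_Icc] at hi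
      exact ⟨1, by rw [Finset.mem_Icc]; omega⟩
  edges_subset := by
    intro e he
    rcases Finset.mem_union.mp he with h | h
    · rcases Finset.mem_image.mp h with ⟨i, hi, rfl⟩
      exact Finset.singleton_subset_iff.mpr hi
    · rcases Finset.mem_image.mp h with ⟨i, hi, rfl⟩
      rw [Finset.mem_Icc] at hi
      exact Finset.Icc_subset_Icc_right hi.2
  atomic := fun v hv => Finset.mem_union_left _ (Finset.mem_image_of_mem _ hv)

/-! A subset of `{1, …, n+1}` with at least two elements is connected in `ℂₙ` exactly when it
is an initial interval `{1, …, m}`: without `1` any vertex is cut off from the rest, and a gap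
`c` splits the set into its parts below and above `c`, because an interval edge inside the set
lies below `c`. So removing `x` from a connected `Y = {1, …, m}` leaves the component
`{1, …, x-1}` and singletons above `x`, and whether `x` disconnects `y` and `z` (namely unless
`y < x` and `z < x`) does not depend on `Y`. -/

open Finset

namespace FHypergraph

variable {α : Type*} [DecidableEq α]

theorem ext {G H : FHypergraph α} (hv : G.verts = H.verts) (he : G.edges = H.edges) :
    G = H := by
  cases G; cases H; cases hv; cases he; rfl

theorem restrict_verts_of_subset {H : FHypergraph α} {X : Finset α} (hX : X ⊆ H.verts) :
    (H.restrict X).verts = X :=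
  inter_eq_left.mpr hX

theorem restrict_restrict (H : FHypergraph α) {Y C : Finset α} (h : C ⊆ Y) :
    (H.restrict Y).restrict C = H.restrict C := by
  refine ext ?_ ?_
  · show C ∩ (Y ∩ H.verts) = C ∩ H.verts
    rw [← inter_assoc, inter_eq_left.mpr h]
  · show (H.edges.filter (· ⊆ Y)).filter (· ⊆ C) = H.edges.filter (· ⊆ C)
    rw [filter_filter]
    exact filter_congr fun e _ => ⟨And.right, fun hC => ⟨hC.trans h, hC⟩⟩

theorem restrict_self (H : FHypergraph α) : H.restrict H.verts = H :=
  ext (inter_self _) (filter_true_of_mem H.edges_subset)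

theorem connected_of_forall_exists_edge {H : FHypergraph α} {v : α} (hv : v ∈ H.verts)
    (h : ∀ A B : Finset α, B.Nonempty → Disjoint A B → A ∪ B = H.verts → v ∈ A →
      ∃ e ∈ H.edges, ¬e ⊆ A ∧ ¬e ⊆ B) :
    H.Connected := by
  refine ⟨⟨v, hv⟩, fun X₁ X₂ h₁ h₂ hd hu => ?_⟩
  rcases mem_union.mp (hu ▸ hv : v ∈ X₁ ∪ X₂) with hv₁ | hv₂
  · exact h X₁ X₂ h₂ hd hu hv₁
  · obtain ⟨e, he, he₂, he₁⟩ := h X₂ X₁ h₁ hd.symm (by rwa [union_comm]) hv₂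
    exact ⟨e, he, he₁, he₂⟩

theorem not_connected_restrict_of_partition {H : FHypergraph α} {X A B : Finset α}
    (hX : X ⊆ H.verts) (hA : A.Nonempty) (hB : B.Nonempty) (hAB : Disjoint A B)
    (hunion : A ∪ B = X) (hedge : ∀ e ∈ H.edges, e ⊆ X → e ⊆ A ∨ e ⊆ B) :
    ¬(H.restrict X).Connected := by
  rintro ⟨-, hconn⟩
  obtain ⟨e, he, heA, heB⟩ :=
    hconn A B hA hB hAB (by rw [restrict_verts_of_subset hX, hunion])
  obtain ⟨he, heX⟩ := mem_filter.mp he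
  exact (hedge e he heX).elim heA heB

theorem isComponent_restrict_iff {H : FHypergraph α} {D C : Finset α} (hD : D ⊆ H.verts) :
    (H.restrict D).IsComponent C ↔ C ⊆ D ∧ (H.restrict C).Connected ∧
      ∀ D' : Finset α, C ⊆ D' → D' ⊆ D → (H.restrict D').Connected → D' = C := by
  rw [IsComponent, restrict_verts_of_subset hD]
  constructor
  · rintro ⟨hC, hconn, hmax⟩
    refine ⟨hC, restrict_restrict H hC ▸ hconn, fun D' hCD' hD' hconn' => ?_⟩
    exact hmax D' hCD' hD' (by rwa [restrict_restrict H hD'])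
  · rintro ⟨hC, hconn, hmax⟩
    refine ⟨hC, by rwa [restrict_restrict H hC], fun D' hCD' hD' hconn' => ?_⟩
    exact hmax D' hCD' hD' (by rwa [restrict_restrict H hD'] at hconn')

theorem links_restrict {H : FHypergraph α} {Y : Finset α} (hY : Y ⊆ H.verts) (x y z : α) :
    (H.restrict Y).Links x y z ↔ (H.restrict (Y \ {x})).SameComponent y z := by
  rw [Links, restrict_verts_of_subset hY, restrict_restrict H sdiff_subset]

end FHypergraph

namespace cubeH

open FHypergraph

variable {n : ℕ}

theorem mem_edges {e : Finset ℕ} :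
    e ∈ (cubeH n).edges ↔
      (∃ i ∈ Icc 1 (n + 1), e = {i}) ∨ ∃ i ∈ Icc 1 (n + 1), e = Icc 1 i := by
  simp [cubeH, eq_comm]

theorem not_connected_of_one_not_mem {X : Finset ℕ} (hX : X ⊆ Icc 1 (n + 1)) (h1 : 1 ∉ X)
    {a b : ℕ} (ha : a ∈ X) (hb : b ∈ X) (hab : a ≠ b) :
    ¬((cubeH n).restrict X).Connected := by
  refine not_connected_restrict_of_partition hX (singleton_nonempty a)
    ⟨b, mem_erase.mpr ⟨hab.symm, hb⟩⟩ (disjoint_singleton_left.mpr (notMem_erase a X))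
    (insert_erase ha) fun e he heX => ?_
  rcases mem_edges.mp he with ⟨i, -, rfl⟩ | ⟨i, hi, rfl⟩
  · by_cases hia : i = a
    · exact Or.inl (by rw [hia])
    · exact Or.inr (singleton_subset_iff.mpr (mem_erase.mpr ⟨hia, heX (mem_singleton_self i)⟩))
  · exact absurd (heX (mem_Icc.mpr ⟨le_rfl, (mem_Icc.mp hi).1⟩)) h1

theorem not_connected_of_gap {X : Finset ℕ} (hX : X ⊆ Icc 1 (n + 1)) {a b c : ℕ}
    (ha : a ∈ X) (hb : b ∈ X) (hc : c ∉ X) (hac : a < c) (hcb : c < b) :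
    ¬((cubeH n).restrict X).Connected := by
  refine not_connected_restrict_of_partition hX ⟨a, mem_filter.mpr ⟨ha, hac⟩⟩
    ⟨b, mem_filter.mpr ⟨hb, hcb.not_gt⟩⟩ (disjoint_filter_filter_not X X (· < c))
    (filter_union_filter_not_eq _ X) fun e he heX => ?_
  rcases mem_edges.mp he with ⟨i, -, rfl⟩ | ⟨i, -, rfl⟩
  · have hi := heX (mem_singleton_self i)
    by_cases hic : i < c
    · exact Or.inl (singleton_subset_iff.mpr (mem_filter.mpr ⟨hi, hic⟩))
    · exact Or.inr (singleton_subset_iff.mpr (mem_filter.mpr ⟨hi, hic⟩))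
  · have ha1 : 1 ≤ a := (mem_Icc.mp (hX ha)).1
    have hic : i < c := by
      by_contra hci
      exact hc (heX (mem_Icc.mpr ⟨by omega, by omega⟩))
    exact Or.inl fun t ht => mem_filter.mpr ⟨heX ht, by rw [mem_Icc] at ht; omega⟩

theorem connected_Icc {m : ℕ} (hm : 1 ≤ m) (hmn : m ≤ n + 1) :
    ((cubeH n).restrict (Icc 1 m)).Connected := by
  have hsub : Icc 1 m ⊆ Icc 1 (n + 1) := Icc_subset_Icc_right hmn
  have h1 : 1 ∈ Icc 1 m := mem_Icc.mpr ⟨le_rfl, hm⟩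
  refine connected_of_forall_exists_edge (by rwa [restrict_verts_of_subset hsub])
    fun A B ⟨k, hkB⟩ hAB hunion h1A => ?_
  rw [restrict_verts_of_subset hsub] at hunion
  have hk : k ∈ Icc 1 m := hunion ▸ mem_union_right A hkB
  have hkm := mem_Icc.mp hk
  refine ⟨Icc 1 k, mem_filter.mpr ⟨?_, Icc_subset_Icc_right hkm.2⟩, fun hA => ?_, fun hB => ?_⟩
  · exact mem_edges.mpr (Or.inr ⟨k, hsub hk, rfl⟩)
  · exact disjoint_left.mp hAB (hA (mem_Icc.mpr ⟨hkm.1, le_rfl⟩)) hkB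
  · exact disjoint_left.mp hAB h1A (hB (mem_Icc.mpr ⟨le_rfl, hkm.1⟩))

theorem eq_Icc_of_connected {X : Finset ℕ} (hX : X ⊆ Icc 1 (n + 1)) (hcard : 1 < X.card)
    (hconn : ((cubeH n).restrict X).Connected) : ∃ m ≤ n + 1, X = Icc 1 m := by
  obtain ⟨a, ha, b, hb, hab⟩ := one_lt_card.mp hcard
  have h1 : 1 ∈ X := by
    by_contra h1
    exact not_connected_of_one_not_mem hX h1 ha hb hab hconn
  have hmax := X.max'_mem ⟨1, h1⟩
  refine ⟨X.max' ⟨1, h1⟩, (mem_Icc.mp (hX hmax)).2, Subset.antisymm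
    (fun t ht => mem_Icc.mpr ⟨(mem_Icc.mp (hX ht)).1, X.le_max' t ht⟩) fun t ht => ?_⟩
  by_contra htX
  obtain ⟨ht1, htm⟩ := mem_Icc.mp ht
  exact not_connected_of_gap hX h1 hmax htX (ht1.lt_of_ne (ne_of_mem_of_not_mem h1 htX))
    (htm.lt_of_ne (ne_of_mem_of_not_mem hmax htX).symm) hconn

theorem sameComponent_iff {m x i j : ℕ} (hmn : m ≤ n + 1) (hx : x ∈ Icc 1 m)
    (hi : i ∈ Icc 1 m) (hj : j ∈ Icc 1 m) (hij : i ≠ j) :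
    ((cubeH n).restrict (Icc 1 m \ {x})).SameComponent i j ↔ i < x ∧ j < x := by
  rw [mem_Icc] at hx hi hj
  have hD : Icc 1 m \ {x} ⊆ Icc 1 (n + 1) := sdiff_subset.trans (Icc_subset_Icc_right hmn)
  constructor
  · rintro ⟨C, hcomp, hiC, hjC⟩
    obtain ⟨hCD, hconn, -⟩ := (isComponent_restrict_iff hD).mp hcomp
    obtain ⟨k, -, rfl⟩ := eq_Icc_of_connected (hCD.trans hD)
      (one_lt_card.mpr ⟨i, hiC, j, hjC, hij⟩) hconn
    have hxk : k < x := by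
      by_contra hkx
      exact (mem_sdiff.mp (hCD (mem_Icc.mpr ⟨hx.1, not_lt.mp hkx⟩))).2 (mem_singleton_self x)
    rw [mem_Icc] at hiC hjC
    omega
  · rintro ⟨hixlt, hjxlt⟩
    have hCD : Icc 1 (x - 1) ⊆ Icc 1 m \ {x} := fun t ht => by
      simp only [mem_sdiff, mem_Icc, mem_singleton] at ht ⊢
      omega
    refine ⟨Icc 1 (x - 1), (isComponent_restrict_iff hD).mpr ⟨hCD, connected_Icc (by omega)
      (by omega), fun D' hCD' hD'D hconn' => Subset.antisymm (fun b hb => ?_) hCD'⟩,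
      mem_Icc.mpr ⟨hi.1, by omega⟩, mem_Icc.mpr ⟨hj.1, by omega⟩⟩
    have hbD := mem_sdiff.mp (hD'D hb)
    have hxD' : x ∉ D' := fun hxD' => (mem_sdiff.mp (hD'D hxD')).2 (mem_singleton_self x)
    by_contra hbC
    rw [mem_Icc] at hbC
    rw [mem_Icc, mem_singleton] at hbD
    exact not_connected_of_gap (hD'D.trans hD) (hCD' (mem_Icc.mpr ⟨by omega, le_rfl⟩)) hb
      hxD' (by omega) (by omega) hconn'

theorem links_iff {x i j : ℕ} (hx : x ∈ Icc 1 (n + 1)) (hi : i ∈ Icc 1 (n + 1))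
    (hj : j ∈ Icc 1 (n + 1)) (hij : i ≠ j) : (cubeH n).Links x i j ↔ i < x ∧ j < x :=
  sameComponent_iff le_rfl hx hi hj hij

theorem contextual : (cubeH n).Contextual := by
  intro Y hY hconn hcard x y z hx hy hz _ hyz _
  obtain ⟨m, hmn, rfl⟩ := eq_Icc_of_connected hY (by omega) hconn
  rw [links_restrict hY, sameComponent_iff hmn hx hy hz hyz,
    links_iff (hY hx) (hY hy) (hY hz) hyz]

end cubeH

/-- Theorem `thm:examples` (b).  Every cube hypergraph `ℂₙ` is a
connected contextual hypergraph; moreover, for distinct `i, j, x ∈ {1, …, p+1}`, the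
vertices `i` and `j` lie in the same connected component of `ℂ_p ∖ {x}` iff `i < x` and
`j < x`. -/
theorem stmt16 :
    (∀ n : ℕ, (cubeH n).Connected ∧ (cubeH n).Contextual) ∧
    ∀ p i j x : ℕ, i ∈ Finset.Icc 1 (p + 1) → j ∈ Finset.Icc 1 (p + 1) →
      x ∈ Finset.Icc 1 (p + 1) → i ≠ j → i ≠ x → j ≠ x →
      ((cubeH p).Links x i j ↔ i < x ∧ j < x) :=
  ⟨fun n => ⟨FHypergraph.restrict_self (cubeH n) ▸ cubeH.connected_Icc le_add_self le_rfl,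
    cubeH.contextual⟩,
   fun _ _ _ _ hi hj hx hij _ _ => cubeH.links_iff hx hi hj hij⟩

end
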